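/- Let M be a simplicial complex and let {a,b} ∈ M be an edge satisfying the Link Condition. Let B denote the complex whose faces are the sets S and S ∪ {b} for S ∈ ast(b, lk(a,M)) (i.e., B = {b} * ast(b, lk(a,M))). Then ast(a,M) ∩ B = lk(a,M). -/

import Mathlib

open Finset

variable {V : Type*} [DecidableEq V]

/-- A (finite) simplicial complex, given by its finite family of faces:
closed under subsets and containing the empty set.  The vertices of `K` are
exactly the elements `v` with `{v} ∈ K`. -/
def IsComplex (K : Finset (Finset V)) : Prop :=
  ∅ ∈ K ∧ ∀ S ∈ K, ∀ T ⊆ S, T ∈ K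

/-- The dimension of `K` : the maximum of `|F| - 1` over the faces `F` of `K`. -/
def dimC (K : Finset (Finset V)) : ℤ :=
  ((K.sup Finset.card : ℕ) : ℤ) - 1

/-- `T` is a missing face of `K` : a set of vertices of `K` which is not a face of `K`
while all its proper subsets are faces of `K`. -/
def IsMissingFace (K : Finset (Finset V)) (T : Finset V) : Prop :=
  (∀ x ∈ T, ({x} : Finset V) ∈ K) ∧ T ∉ K ∧ ∀ S ⊂ T, S ∈ K

/-- The contraction of `u` onto `v` is admissible if no missing face of `K` of
dimension `≤ dim K` contains both `u` and `v`. -/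
def Admissible (K : Finset (Finset V)) (u v : V) : Prop :=
  ∀ T : Finset V, IsMissingFace K T → (T.card : ℤ) - 1 ≤ dimC K → ¬(u ∈ T ∧ v ∈ T)

/-- The contraction of `u` onto `v`:
`K' = {T ∈ K : u ∉ T} ∪ {(T \ {u}) ∪ {v} : u ∈ T ∈ K}`. -/
def contractC (K : Finset (Finset V)) (u v : V) : Finset (Finset V) :=
  K.filter (fun T => u ∉ T) ∪ (K.filter (fun T => u ∈ T)).image (fun T => insert v (T.erase u))

/-- The link of a face: `lk(S,K) = {T ∈ K : T ∩ S = ∅ ∧ T ∪ S ∈ K}`. -/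
def linkC (K : Finset (Finset V)) (S : Finset V) : Finset (Finset V) :=
  K.filter (fun T => T ∩ S = ∅ ∧ T ∪ S ∈ K)

/-- The `m`-skeleton: all faces of dimension at most `m`. -/
def skelC (K : Finset (Finset V)) (m : ℤ) : Finset (Finset V) :=
  K.filter (fun F => (F.card : ℤ) - 1 ≤ m)

/-- The antistar of a vertex: `ast(v,K) = {T ∈ K : v ∉ T}`. -/
def astC (K : Finset (Finset V)) (v : V) : Finset (Finset V) :=
  K.filter fun T => v ∉ T

/-- `B = {b} * ast(b, lk(a,M))`: the faces are the sets `S` and `S ∪ {b}`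
for `S ∈ ast(b, lk(a,M))`. -/
def coneB (M : Finset (Finset V)) (a b : V) : Finset (Finset V) :=
  astC (linkC M {a}) b ∪ (astC (linkC M {a}) b).image fun S => insert b S

theorem mem_astC {K : Finset (Finset V)} {v : V} {T : Finset V} :
    T ∈ astC K v ↔ T ∈ K ∧ v ∉ T :=
  mem_filter

theorem mem_linkC {K : Finset (Finset V)} {S T : Finset V} :
    T ∈ linkC K S ↔ T ∈ K ∧ Disjoint T S ∧ T ∪ S ∈ K := by
  rw [linkC, mem_filter, disjoint_iff_inter_eq_empty]

theorem mem_linkC_singleton {K : Finset (Finset V)} {v : V} {T : Finset V} :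
    T ∈ linkC K {v} ↔ T ∈ K ∧ v ∉ T ∧ insert v T ∈ K := by
  rw [mem_linkC, disjoint_singleton_right, union_singleton]

theorem mem_coneB {M : Finset (Finset V)} {a b : V} {T : Finset V} :
    T ∈ coneB M a b ↔
      T ∈ astC (linkC M {a}) b ∨ ∃ S ∈ astC (linkC M {a}) b, insert b S = T := by
  rw [coneB, mem_union, mem_image]

theorem IsComplex.mem_linkC_of_subset {K : Finset (Finset V)} (hK : IsComplex K)
    {S T F : Finset V} (hS : S ∈ linkC K F) (hTS : T ⊆ S) : T ∈ linkC K F := by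
  obtain ⟨hSK, hSF, hSFK⟩ := mem_linkC.1 hS
  exact mem_linkC.2 ⟨hK.2 S hSK T hTS, hSF.mono_left hTS,
    hK.2 _ hSFK _ (union_subset_union hTS subset_rfl)⟩

theorem linkC_singleton_subset_astC (K : Finset (Finset V)) (v : V) :
    linkC K {v} ⊆ astC K v := fun _ hT =>
  let ⟨hTK, hvT, _⟩ := mem_linkC_singleton.1 hT
  mem_astC.2 ⟨hTK, hvT⟩

theorem IsComplex.linkC_singleton_subset_coneB {M : Finset (Finset V)} (hM : IsComplex M)
    (a b : V) : linkC M {a} ⊆ coneB M a b := by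
  intro T hT
  rw [mem_coneB]
  by_cases hbT : b ∈ T
  · have hTb : T.erase b ∈ astC (linkC M {a}) b :=
      mem_astC.2 ⟨hM.mem_linkC_of_subset hT (erase_subset b T), notMem_erase b T⟩
    exact Or.inr ⟨T.erase b, hTb, insert_erase hbT⟩
  · exact Or.inl (mem_astC.2 ⟨hT, hbT⟩)

/-- For `T = insert b S` with `S ∈ ast(b, lk(a))`, the face `T ∈ M` puts `S` in `lk(b)`, so the
Link Condition gives `S ∪ {a, b} = insert a T ∈ M`. -/
theorem astC_inter_coneB_subset_linkC {M : Finset (Finset V)} {a b : V}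
    (hLC : linkC M {a} ∩ linkC M {b} = linkC M {a, b}) :
    astC M a ∩ coneB M a b ⊆ linkC M {a} := by
  intro T hT
  obtain ⟨hTa, hTB⟩ := mem_inter.1 hT
  obtain ⟨hTM, haT⟩ := mem_astC.1 hTa
  rcases mem_coneB.1 hTB with hTb | ⟨S, hSb, rfl⟩
  · exact (mem_astC.1 hTb).1
  obtain ⟨hSa, hbS⟩ := mem_astC.1 hSb
  have hSlkb : S ∈ linkC M {b} :=
    mem_linkC_singleton.2 ⟨(mem_linkC_singleton.1 hSa).1, hbS, hTM⟩
  have hSlkab : S ∈ linkC M {a, b} := hLC ▸ mem_inter.2 ⟨hSa, hSlkb⟩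
  have hSab : S ∪ {a, b} ∈ M := (mem_linkC.1 hSlkab).2.2
  rw [union_insert, union_singleton] at hSab
  exact mem_linkC_singleton.2 ⟨hTM, haT, hSab⟩

theorem antistar_inter_cone_eq_link_of_linkCondition_general
    (M : Finset (Finset V)) (hM : IsComplex M) (a b : V)
    (hLC : linkC M {a} ∩ linkC M {b} = linkC M {a, b}) :
    astC M a ∩ coneB M a b = linkC M {a} :=
  (astC_inter_coneB_subset_linkC hLC).antisymm <|
    subset_inter (linkC_singleton_subset_astC M a) (hM.linkC_singleton_subset_coneB a b)

/-- If the edge `{a,b}` of `M` satisfies the Link Condition and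
`B = {b} * ast(b, lk(a,M))`, then `ast(a,M) ∩ B = lk(a,M)`. -/
theorem antistar_inter_cone_eq_link_of_linkCondition
    (M : Finset (Finset V)) (hM : IsComplex M) (a b : V) (hab : a ≠ b)
    (he : ({a, b} : Finset V) ∈ M)
    (hLC : linkC M {a} ∩ linkC M {b} = linkC M {a, b}) :
    astC M a ∩ coneB M a b = linkC M {a} :=
  antistar_inter_cone_eq_link_of_linkCondition_general M hM a b hLC
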